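/- Let f(x) = a_0 x + a_1 x^{q^s} + … + a_k x^{q^{sk}} be a q^s-linearized polynomial over F_{q^n} with gcd(s,n) = 1, k ≤ n-1, and not all coefficients zero. Then the kernel of f (as an F_q-linear endomorphism of F_{q^n}) has F_q-dimension at most k; moreover, if the kernel has dimension exactly k, then N_{q^n/q}(a_0) = (-1)^{nk} N_{q^n/q}(a_k). -/

import Mathlib

/-!
If `x ≠ 0` is a root of `f = ∑ aᵢ σⁱ` (here `σ` is the `q^s`-Frobenius), then `f` factors on the
right as `g ∘ (σ - c)` with `c = σ x / x`, where `g` has degree `k - 1`, the same leading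
coefficient as `f`, and constant term `g₀` with `a₀ = -g₀ c`. Since the fixed field of `σ` is
`F_q`, the kernel of `σ - c` is the line `F_q x`, so the kernel dimension grows by at most one per
degree. In the equality case the norm identity propagates through the induction because
`N(c) = N(σ x) / N(x) = 1`.
-/

open Module LinearMap Finset

theorem LinearMap.finrank_ker_comp_le {K V W U : Type*} [Field K] [AddCommGroup V] [Module K V]
    [AddCommGroup W] [Module K W] [AddCommGroup U] [Module K U] [FiniteDimensional K V]
    [FiniteDimensional K W] (f : V →ₗ[K] W) (g : W →ₗ[K] U) :
    finrank K (ker (g ∘ₗ f)) ≤ finrank K (ker g) + finrank K (ker f) := by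
  have := LinearMap.lift_rank_comap_le (f := f) (ker g)
  rwa [← Submodule.finrank_eq_rank, ← Submodule.finrank_eq_rank, ← Submodule.finrank_eq_rank,
    Cardinal.lift_natCast, Cardinal.lift_natCast, Cardinal.lift_natCast, ← Nat.cast_add,
    Nat.cast_le, ← ker_comp] at this

theorem Algebra.norm_neg {K L : Type*} [Field K] [Field L] [Algebra K L] [FiniteDimensional K L]
    (y : L) : Algebra.norm K (-y) = (-1) ^ finrank K L * Algebra.norm K y := by
  rw [neg_eq_neg_one_mul, map_mul, ← map_one (algebraMap K L), ← map_neg, Algebra.norm_algebraMap]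

theorem FiniteField.mem_range_of_frobenius_pow_apply_eq {K L : Type*} [Field K] [Fintype K]
    [Field L] [Finite L] [Algebra K L] {s : ℕ} (hs : s.Coprime (finrank K L)) {z : L}
    (hz : (frobeniusAlgEquivOfAlgebraic K L ^ s) z = z) : z ∈ Set.range (algebraMap K L) := by
  set φ := frobeniusAlgEquivOfAlgebraic K L
  have hs' : Function.IsPeriodicPt φ s z := by rwa [Function.IsPeriodicPt, ← AlgEquiv.coe_pow]
  have hn : Function.IsPeriodicPt φ (finrank K L) z := by
    rw [Function.IsPeriodicPt, ← AlgEquiv.coe_pow, ← orderOf_frobeniusAlgEquivOfAlgebraic,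
      pow_orderOf_eq_one]
    rfl
  have hφ : Function.IsFixedPt φ z := by
    simpa [hs.gcd_eq_one, Function.IsPeriodicPt] using hs'.gcd hn
  refine (IsGalois.mem_range_algebraMap_iff_fixed z).mpr fun τ => ?_
  obtain ⟨j, rfl⟩ := (bijective_frobeniusAlgEquivOfAlgebraic_pow K L).surjective τ
  rw [AlgEquiv.coe_pow]
  exact hφ.iterate _

section Linearized

variable {K L : Type*} [Field K] [Field L] [Algebra K L]

noncomputable def linearized (σ : L ≃ₐ[K] L) (a : ℕ → L) (k : ℕ) : L →ₗ[K] L :=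
  ∑ i ∈ range (k + 1), a i • (σ ^ i).toLinearMap

variable (σ : L ≃ₐ[K] L)

lemma linearized_apply (a : ℕ → L) (k : ℕ) (y : L) :
    linearized σ a k y = ∑ i ∈ range (k + 1), a i * (σ ^ i) y := by
  simp [linearized]

lemma linearized_zero_apply (a : ℕ → L) (y : L) : linearized σ a 0 y = a 0 * y := by
  simp [linearized_apply]

lemma linearized_succ_apply (a : ℕ → L) (k : ℕ) (y : L) :
    linearized σ a (k + 1) y = linearized σ a k y + a (k + 1) * (σ ^ (k + 1)) y := by
  simp only [linearized_apply, sum_range_succ _ (k + 1)]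

/-- Coefficients of the right quotient of `∑ aᵢ σⁱ` by `σ - σ x / x` in the skew polynomial ring. -/
noncomputable def rightDivCoeff (a : ℕ → L) (x : L) (j : ℕ) : L :=
  -linearized σ a j x / (σ ^ (j + 1)) x

variable {x : L}

lemma sum_rightDivCoeff_mul_apply_sub (a : ℕ → L) (hx : x ≠ 0) (m : ℕ) (y : L) :
    ∑ j ∈ range m, rightDivCoeff σ a x j * (σ ^ j) (σ y - σ x / x * y) =
      linearized σ a m y - linearized σ a m x / (σ ^ m) x * (σ ^ m) y := by
  induction m with
  | zero => simp [linearized_zero_apply, hx]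
  | succ m ih =>
    have hXm : (σ ^ m) x ≠ 0 := (map_ne_zero _).mpr hx
    have hXm' : (σ ^ (m + 1)) x ≠ 0 := (map_ne_zero _).mpr hx
    have hσ (z : L) : (σ ^ m) (σ z) = (σ ^ (m + 1)) z := by rw [pow_succ, AlgEquiv.mul_apply]
    rw [sum_range_succ, ih, rightDivCoeff, linearized_succ_apply, linearized_succ_apply,
      map_sub, map_mul, map_div₀, hσ, hσ]
    field_simp
    ring

lemma linearized_comp_sub_smul (a : ℕ → L) (hx : x ≠ 0) {k : ℕ}
    (hfx : linearized σ a (k + 1) x = 0) :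
    linearized σ (rightDivCoeff σ a x) k ∘ₗ (σ.toLinearMap - (σ x / x) • LinearMap.id) =
      linearized σ a (k + 1) := by
  ext y
  have := sum_rightDivCoeff_mul_apply_sub σ a hx (k + 1) y
  rw [hfx, zero_div, zero_mul, sub_zero] at this
  simpa [linearized_apply] using this

lemma rightDivCoeff_zero_mul (a : ℕ → L) (hx : x ≠ 0) :
    -(rightDivCoeff σ a x 0 * (σ x / x)) = a 0 := by
  have : σ x ≠ 0 := (map_ne_zero σ).mpr hx
  simp only [rightDivCoeff, linearized_zero_apply, zero_add, pow_one]
  field_simp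

lemma rightDivCoeff_of_linearized_eq_zero (a : ℕ → L) (hx : x ≠ 0) {k : ℕ}
    (hfx : linearized σ a (k + 1) x = 0) : rightDivCoeff σ a x k = a (k + 1) := by
  have : (σ ^ (k + 1)) x ≠ 0 := (map_ne_zero _).mpr hx
  rw [linearized_succ_apply, add_eq_zero_iff_eq_neg] at hfx
  rw [rightDivCoeff, hfx, neg_neg, mul_div_assoc, div_self this, mul_one]

lemma ker_sub_smul_le_span (hσ : ∀ z, σ z = z → z ∈ Set.range (algebraMap K L)) (hx : x ≠ 0) :
    ker (σ.toLinearMap - (σ x / x) • LinearMap.id) ≤ K ∙ x := by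
  intro y hy
  have hy : σ y = σ x / x * y := by simpa [sub_eq_zero] using hy
  obtain ⟨t, ht⟩ := hσ (y / x) <| by
    rw [map_div₀, hy]
    field_simp [(map_ne_zero σ).mpr hx]
  exact Submodule.mem_span_singleton.mpr ⟨t, by rw [Algebra.smul_def, ht, div_mul_cancel₀ _ hx]⟩

lemma norm_apply_div_self [FiniteDimensional K L] (hx : x ≠ 0) :
    Algebra.norm K (σ x / x) = 1 := by
  rw [div_eq_mul_inv, map_mul, Algebra.norm_inv, Algebra.norm_eq_of_algEquiv,
    mul_inv_cancel₀ (Algebra.norm_ne_zero_iff.mpr hx)]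

variable [FiniteDimensional K L] (hσ : ∀ z, σ z = z → z ∈ Set.range (algebraMap K L))
include hσ

theorem finrank_ker_linearized_le {k : ℕ} {a : ℕ → L} (hak : a k ≠ 0) :
    finrank K (ker (linearized σ a k)) ≤ k ∧
      (finrank K (ker (linearized σ a k)) = k →
        Algebra.norm K (a 0) = (-1) ^ (finrank K L * k) * Algebra.norm K (a k)) := by
  induction k generalizing a with
  | zero =>
    have : ker (linearized σ a 0) = ⊥ :=
      ker_eq_bot'.mpr fun y hy => by simpa [linearized_zero_apply, hak] using hy
    simp [this]
  | succ k ih =>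
    rcases eq_or_ne (ker (linearized σ a (k + 1))) ⊥ with hbot | hbot
    · rw [hbot, finrank_bot]
      exact ⟨by omega, fun h => by omega⟩
    obtain ⟨x, hfx, hx⟩ := (Submodule.ne_bot_iff _).mp hbot
    rw [mem_ker] at hfx
    have hbk := rightDivCoeff_of_linearized_eq_zero σ a hx hfx
    obtain ⟨ih_le, ih_norm⟩ := ih (hbk ▸ hak)
    have hP : finrank K (ker (σ.toLinearMap - (σ x / x) • LinearMap.id)) ≤ 1 :=
      (Submodule.finrank_mono (ker_sub_smul_le_span σ hσ hx)).trans (finrank_span_singleton hx).le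
    have hle := finrank_ker_comp_le (σ.toLinearMap - (σ x / x) • LinearMap.id)
      (linearized σ (rightDivCoeff σ a x) k)
    rw [linearized_comp_sub_smul σ a hx hfx] at hle
    refine ⟨by omega, fun heq => ?_⟩
    rw [← rightDivCoeff_zero_mul σ a hx, Algebra.norm_neg, map_mul, norm_apply_div_self σ hx,
      mul_one, ih_norm (by omega), hbk, mul_add, mul_one, pow_add]
    ring

theorem finrank_ker_linearized_le_of_exists {k : ℕ} {a : ℕ → L} (ha : ∃ i ≤ k, a i ≠ 0) :
    finrank K (ker (linearized σ a k)) ≤ k ∧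
      (finrank K (ker (linearized σ a k)) = k →
        Algebra.norm K (a 0) = (-1) ^ (finrank K L * k) * Algebra.norm K (a k)) := by
  obtain ⟨i, hik, hai⟩ := ha
  induction k with
  | zero => exact finrank_ker_linearized_le σ hσ (Nat.le_zero.mp hik ▸ hai)
  | succ k ih =>
    by_cases hak : a (k + 1) = 0
    · have hik : i ≤ k := by
        rcases Nat.lt_or_eq_of_le hik with h | rfl
        · omega
        · exact absurd hak hai
      have : linearized σ a (k + 1) = linearized σ a k := by
        ext y
        simp [linearized_succ_apply, hak]
      rw [this]
      exact ⟨(ih hik).1.trans k.le_succ, fun h => by have := (ih hik).1; omega⟩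
    · exact finrank_ker_linearized_le σ hσ hak

end Linearized

theorem linearized_kernel_bound_general (Fq L : Type*) [Field Fq] [Field L] [Algebra Fq L]
    [Fintype Fq] [Fintype L] (q s n k : ℕ) (hq : Fintype.card Fq = q)
    (hn : Module.finrank Fq L = n) (hsn : Nat.gcd s n = 1)
    (a : Fin (k + 1) → L) (ha : ∃ i, a i ≠ 0) :
    Nat.card {x : L // ∑ i : Fin (k + 1), a i * x ^ q ^ (s * (i : ℕ)) = 0} ≤ q ^ k ∧
      (Nat.card {x : L // ∑ i : Fin (k + 1), a i * x ^ q ^ (s * (i : ℕ)) = 0} = q ^ k →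
        Algebra.norm Fq (a 0) = (-1) ^ (n * k) * Algebra.norm Fq (a (Fin.last k))) := by
  subst hq hn
  set σ := FiniteField.frobeniusAlgEquivOfAlgebraic Fq L ^ s
  set b : ℕ → L := fun i => a (Fin.ofNat (k + 1) i)
  have hσ (i : ℕ) (z : L) : (σ ^ i) z = z ^ Fintype.card Fq ^ (s * i) := by
    rw [← pow_mul, AlgEquiv.coe_pow, FiniteField.coe_frobeniusAlgEquivOfAlgebraic_iterate]
  have hcard : Nat.card {x : L // ∑ i : Fin (k + 1), a i * x ^ Fintype.card Fq ^ (s * (i : ℕ)) = 0}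
      = Fintype.card Fq ^ finrank Fq (ker (linearized σ b k)) := by
    rw [← Nat.card_eq_fintype_card, ← Module.natCard_eq_pow_finrank]
    refine Nat.card_congr (Equiv.subtypeEquivRight fun x => ?_)
    simp [b, linearized_apply, hσ, ← Fin.sum_univ_eq_sum_range]
  obtain ⟨hle, hnorm⟩ := finrank_ker_linearized_le_of_exists σ
    (fun _ => FiniteField.mem_range_of_frobenius_pow_apply_eq hsn) (a := b)
    (let ⟨i, hi⟩ := ha; ⟨i, i.is_le, by simpa [b] using hi⟩)
  have hq : 1 < Fintype.card Fq := Fintype.one_lt_card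
  rw [hcard]
  refine ⟨Nat.pow_le_pow_right hq.le hle, fun h => ?_⟩
  simpa [b] using hnorm (Nat.pow_right_injective hq h)

/-- Kernel bound for `q^s`-linearized polynomials (Gow–Quinlan / Guralnick): the root set of
`a_0 x + a_1 x^{q^s} + ⋯ + a_k x^{q^{sk}}` has size at most `q^k` (i.e. `F_q`-dimension at
most `k`), and if it has size exactly `q^k` then `N(a_0) = (-1)^{nk} N(a_k)`. -/
theorem linearized_kernel_bound (Fq L : Type*) [Field Fq] [Field L] [Algebra Fq L]
    [Fintype Fq] [Fintype L] (q s n k : ℕ) (hq : Fintype.card Fq = q)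
    (hn : Module.finrank Fq L = n) (hs : 0 < s) (hsn : Nat.gcd s n = 1) (hk : k ≤ n - 1)
    (a : Fin (k + 1) → L) (ha : ∃ i, a i ≠ 0) :
    Nat.card {x : L // ∑ i : Fin (k + 1), a i * x ^ q ^ (s * (i : ℕ)) = 0} ≤ q ^ k ∧
      (Nat.card {x : L // ∑ i : Fin (k + 1), a i * x ^ q ^ (s * (i : ℕ)) = 0} = q ^ k →
        Algebra.norm Fq (a 0) = (-1) ^ (n * k) * Algebra.norm Fq (a (Fin.last k))) :=
  linearized_kernel_bound_general Fq L q s n k hq hn hsn a ha
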